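/- arXiv:math/0609842 — 2 statements merged into one kernel-verified Lean document; each statement's English description precedes it below -/
import Mathlib

section
/- Let u, v, φ, ψ be positive reals. Then ((v-u)/(uv))(uψ - φv) ≤ (φ^{1/2} - ψ^{1/2})² - min(φ,ψ)·(log(v/ψ^{1/2}) - log(u/φ^{1/2}))². -/
/-- For `1 ≤ x`, `(log x)^2 ≤ x + 1/x - 2`. -/
lemma sq_log_le_aux {x : ℝ} (hx : 1 ≤ x) : (Real.log x) ^ 2 ≤ x + 1/x - 2 := by
  have hx0 : 0 < x := lt_of_lt_of_le one_pos hx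
  set s := Real.sqrt x with hs
  have hs0 : 0 < s := Real.sqrt_pos.mpr hx0
  have hs1 : 1 ≤ s := by
    rw [hs, show (1:ℝ) = Real.sqrt 1 by simp]
    exact Real.sqrt_le_sqrt hx
  have hsq : s * s = x := Real.mul_self_sqrt hx0.le
  have hlog : Real.log x = 2 * Real.log s := by
    rw [← hsq, Real.log_mul (ne_of_gt hs0) (ne_of_gt hs0)]; ring
  have hl0 : 0 ≤ Real.log s := Real.log_nonneg hs1
  have hsinh : Real.log s ≤ Real.sinh (Real.log s) := Real.self_le_sinh_iff.mpr hl0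
  rw [Real.sinh_eq, Real.exp_log hs0, Real.exp_neg, Real.exp_log hs0] at hsinh
  -- hsinh : log s ≤ (s - s⁻¹) / 2
  have key : 2 * Real.log s ≤ s - s⁻¹ := by linarith
  have hpos : 0 ≤ s - s⁻¹ := by
    rw [sub_nonneg]
    calc s⁻¹ ≤ 1 := by rw [inv_le_one_iff₀]; right; exact hs1
      _ ≤ s := hs1
  have h2 : (2 * Real.log s) ^ 2 ≤ (s - s⁻¹) ^ 2 := by
    apply sq_le_sq' _ key
    linarith
  have hinv : s⁻¹ * s = 1 := inv_mul_cancel₀ (ne_of_gt hs0)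
  have hinv2 : s⁻¹ * s⁻¹ = 1 / x := by
    rw [← one_div, div_mul_div_comm, one_mul, hsq]
  rw [hlog]
  nlinarith [h2, hsq, hinv, hinv2]

lemma sq_log_le {x : ℝ} (hx : 0 < x) : (Real.log x) ^ 2 ≤ x + 1/x - 2 := by
  rcases le_or_gt 1 x with h | h
  · exact sq_log_le_aux h
  · have hx1 : 1 ≤ 1/x := by rw [le_div_iff₀ hx]; linarith
    have := sq_log_le_aux hx1
    rw [Real.log_div one_ne_zero (ne_of_gt hx), Real.log_one, one_div_one_div] at this
    nlinarith

theorem log_energy_pointwise (u v φ ψ : ℝ)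
    (hu : 0 < u) (hv : 0 < v) (hφ : 0 < φ) (hψ : 0 < ψ) :
    ((v - u) / (u * v)) * (u * ψ - φ * v)
      ≤ (Real.sqrt φ - Real.sqrt ψ) ^ 2
        - min φ ψ * (Real.log (v / Real.sqrt ψ) - Real.log (u / Real.sqrt φ)) ^ 2 := by
  set sφ := Real.sqrt φ with hsφ
  set sψ := Real.sqrt ψ with hsψ
  have hsφ0 : 0 < sφ := Real.sqrt_pos.mpr hφ
  have hsψ0 : 0 < sψ := Real.sqrt_pos.mpr hψ
  have hφ2 : sφ * sφ = φ := Real.mul_self_sqrt hφ.le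
  have hψ2 : sψ * sψ = ψ := Real.mul_self_sqrt hψ.le
  set A : ℝ := (v / sψ) / (u / sφ) with hA
  have hA0 : 0 < A := by positivity
  have hlogA : Real.log (v / sψ) - Real.log (u / sφ) = Real.log A :=
    (Real.log_div (by positivity) (by positivity)).symm
  have hmin : min φ ψ ≤ sφ * sψ := by
    rcases le_total φ ψ with h | h
    · have hss : sφ ≤ sψ := Real.sqrt_le_sqrt h
      calc min φ ψ = φ := min_eq_left h
        _ = sφ * sφ := hφ2.symm
        _ ≤ sφ * sψ := mul_le_mul_of_nonneg_left hss hsφ0.le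
    · have hss : sψ ≤ sφ := Real.sqrt_le_sqrt h
      calc min φ ψ = ψ := min_eq_right h
        _ = sψ * sψ := hψ2.symm
        _ ≤ sφ * sψ := mul_le_mul_of_nonneg_right hss hsψ0.le
  have hlog2 : (Real.log A) ^ 2 ≤ A + 1/A - 2 := sq_log_le hA0
  have hprodA : sφ * sψ * A = φ * v / u := by
    rw [hA]; field_simp; linear_combination hφ2
  have hprodAi : sφ * sψ * (1/A) = ψ * u / v := by
    rw [hA]; field_simp; linear_combination hψ2
  have h2' : (sφ * sψ) * (A + 1/A - 2) = φ * v / u + ψ * u / v - 2 * (sφ * sψ) := by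
    linear_combination hprodA + hprodAi
  have key : min φ ψ * (Real.log A) ^ 2 ≤ φ * v / u + ψ * u / v - 2 * (sφ * sψ) := by
    have h1 : min φ ψ * (Real.log A) ^ 2 ≤ (sφ * sψ) * (Real.log A) ^ 2 :=
      mul_le_mul_of_nonneg_right hmin (sq_nonneg _)
    have h2 : (sφ * sψ) * (Real.log A) ^ 2 ≤ (sφ * sψ) * (A + 1/A - 2) :=
      mul_le_mul_of_nonneg_left hlog2 (by positivity)
    linarith [h1, h2, h2'.le, h2'.ge]
  have hLHS : ((v - u) / (u * v)) * (u * ψ - φ * v)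
      = φ + ψ - φ * v / u - ψ * u / v := by
    field_simp; ring
  have hRHS : (sφ - sψ) ^ 2 = φ + ψ - 2 * (sφ * sψ) := by
    linear_combination hφ2 + hψ2
  rw [hlogA, hLHS, hRHS]
  linarith [key]
end

section
/- Let H : [t₀, t₂] → ℝ be differentiable with H'(t) ≥ F·H(t)² - E on [t₀,t₂], where E, F > 0. Let Q = max(16E, √(16E/F)) and suppose H(t₂) ≤ -Q. Then H(t) ≤ -Q/2 for all t ∈ [t₀, t₂], and H(t₂) ≥ -16/(F(t₂ - t₀)) provided t₂ > t₀. Consequently H(t₂) ≥ -max(Q, 16/(F(t₂-t₀))). -/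
/-!
Since `H' ≥ -E`, going backwards from `t₂` the function `H` can rise by at most
`E (t₂ - t₀) ≤ 2E ≤ Q/8`, so it stays below `-Q/2`. There `F H² ≥ F Q²/4 ≥ 4E`, hence
`H' ≥ (F/2) H²`: a Riccati inequality for a negative function, which the substitution
`G = -1/H` turns into `G' ≥ F/2`. As `G(t₀) > 0`, this gives `-1/H(t₂) ≥ F (t₂ - t₀)/2`.
-/

open Set

theorem mul_sub_le_image_sub_of_le_hasDerivAt {a b C : ℝ} {f f' : ℝ → ℝ} (hab : a ≤ b)
    (hf : ∀ t ∈ Icc a b, HasDerivAt f (f' t) t) (hC : ∀ t ∈ Icc a b, C ≤ f' t) :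
    C * (b - a) ≤ f b - f a := by
  refine (convex_Icc a b).mul_sub_le_image_sub_of_le_deriv
    (fun t ht => (hf t ht).continuousAt.continuousWithinAt)
    (fun t ht => (hf t (interior_subset ht)).differentiableAt.differentiableWithinAt)
    (fun t ht => ?_) a (left_mem_Icc.mpr hab) b (right_mem_Icc.mpr hab) hab
  rw [(hf t (interior_subset ht)).deriv]
  exact hC t (interior_subset ht)

theorem neg_inv_le_of_sq_mul_le_hasDerivAt {a b c : ℝ} {H H' : ℝ → ℝ} (hc : 0 < c)
    (hab : a < b) (hH : ∀ t ∈ Icc a b, HasDerivAt H (H' t) t)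
    (hneg : ∀ t ∈ Icc a b, H t < 0) (hineq : ∀ t ∈ Icc a b, c * H t ^ 2 ≤ H' t) :
    -(c * (b - a))⁻¹ ≤ H b := by
  have hG : ∀ t ∈ Icc a b, HasDerivAt (fun s => -(H s)⁻¹) (H' t / H t ^ 2) t := fun t ht =>
    ((hH t ht).inv (hneg t ht).ne).neg.congr_deriv (by ring)
  have hG' : ∀ t ∈ Icc a b, c ≤ H' t / H t ^ 2 := fun t ht =>
    (le_div_iff₀ (sq_pos_of_neg (hneg t ht))).mpr (hineq t ht)
  have hGa : 0 < -(H a)⁻¹ := neg_pos.mpr (inv_lt_zero.mpr (hneg a (left_mem_Icc.mpr hab.le)))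
  have hGb : c * (b - a) ≤ (-H b)⁻¹ := by
    rw [inv_neg]
    linarith [mul_sub_le_image_sub_of_le_hasDerivAt hab.le hG hG']
  have hHb : 0 < -H b := neg_pos.mpr (hneg b (right_mem_Icc.mpr hab.le))
  linarith [(le_inv_comm₀ (mul_pos hc (sub_pos.mpr hab)) hHb).mp hGb]

theorem le_mul_sq_of_sqrt_div_le {x F Q : ℝ} (hF : 0 < F) (h : √(x / F) ≤ Q) :
    x ≤ F * Q ^ 2 :=
  (div_le_iff₀' hF).mp (Real.sqrt_le_iff.mp h).2

theorem calculus_lemma_general (t₀ t₂ E F Q : ℝ) (H H' : ℝ → ℝ)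
    (hE : 0 < E) (hF : 0 < F) (hlen : t₂ - t₀ ≤ 2)
    (hderiv : ∀ t ∈ Set.Icc t₀ t₂, HasDerivAt H (H' t) t)
    (hineq : ∀ t ∈ Set.Icc t₀ t₂, H' t ≥ F * (H t) ^ 2 - E)
    (hQ : Q = max (16 * E) (Real.sqrt (16 * E / F)))
    (hH : H t₂ ≤ -Q) :
    (∀ t ∈ Set.Icc t₀ t₂, H t ≤ -Q / 2) ∧
    (t₀ < t₂ →
      H t₂ ≥ -16 / (F * (t₂ - t₀)) ∧
      H t₂ ≥ -max Q (16 / (F * (t₂ - t₀)))) := by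
  have hQE : 16 * E ≤ Q := hQ ▸ le_max_left _ _
  have hQF : 16 * E ≤ F * Q ^ 2 := le_mul_sq_of_sqrt_div_le hF (hQ ▸ le_max_right _ _)
  have hupper : ∀ t ∈ Icc t₀ t₂, H t ≤ -Q / 2 := by
    intro t ⟨ht₀, ht₂⟩
    have hsub : ∀ s ∈ Icc t t₂, s ∈ Icc t₀ t₂ := fun s hs => ⟨ht₀.trans hs.1, hs.2⟩
    have hrise := mul_sub_le_image_sub_of_le_hasDerivAt (C := -E) ht₂
      (fun s hs => hderiv s (hsub s hs))
      (fun s hs => by linarith [hineq s (hsub s hs), mul_nonneg hF.le (sq_nonneg (H s))])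
    nlinarith [mul_le_mul_of_nonneg_left (show t₂ - t ≤ 2 by linarith) hE.le]
  refine ⟨hupper, fun hlt => ?_⟩
  have hriccati : ∀ t ∈ Icc t₀ t₂, F / 2 * H t ^ 2 ≤ H' t := by
    intro t htI
    have hsq : Q ^ 2 ≤ 4 * H t ^ 2 := by nlinarith [hupper t htI]
    nlinarith [hineq t htI, mul_le_mul_of_nonneg_left hsq hF.le]
  have hneg : ∀ t ∈ Icc t₀ t₂, H t < 0 := fun t htI => by linarith [hupper t htI]
  have hbound := neg_inv_le_of_sq_mul_le_hasDerivAt (half_pos hF) hlt hderiv hneg hriccati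
  have hlower : -16 / (F * (t₂ - t₀)) ≤ H t₂ := by
    have hd : 0 < F * (t₂ - t₀) := mul_pos hF (sub_pos.mpr hlt)
    calc -16 / (F * (t₂ - t₀)) ≤ -2 / (F * (t₂ - t₀)) := by gcongr; norm_num
      _ = -(F / 2 * (t₂ - t₀))⁻¹ := by field_simp
      _ ≤ H t₂ := hbound
  refine ⟨hlower, le_trans ?_ hlower⟩
  rw [neg_div]
  exact neg_le_neg (le_max_right _ _)

theorem calculus_lemma (t₀ t₂ E F Q : ℝ) (H H' : ℝ → ℝ)
    (hE : 0 < E) (hF : 0 < F) (ht : t₀ ≤ t₂) (hlen : t₂ - t₀ ≤ 2)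
    (hderiv : ∀ t ∈ Set.Icc t₀ t₂, HasDerivAt H (H' t) t)
    (hineq : ∀ t ∈ Set.Icc t₀ t₂, H' t ≥ F * (H t) ^ 2 - E)
    (hQ : Q = max (16 * E) (Real.sqrt (16 * E / F)))
    (hH : H t₂ ≤ -Q) :
    (∀ t ∈ Set.Icc t₀ t₂, H t ≤ -Q / 2) ∧
    (t₀ < t₂ →
      H t₂ ≥ -16 / (F * (t₂ - t₀)) ∧
      H t₂ ≥ -max Q (16 / (F * (t₂ - t₀)))) :=
  calculus_lemma_general t₀ t₂ E F Q H H' hE hF hlen hderiv hineq hQ hH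
end
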